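/- arXiv:1911.04268 — 8 statements merged into one kernel-verified Lean document; each statement's English description precedes it below -/
import Mathlib

section
/- Every (K,ε)-invertible probabilistic function is a (K,ε)-conductor: for every set S of size at most K, the (1/|S|)-excess of F(U_S) is at most ε. -/
theorem stmt_3 {X Y : Type*} [Fintype X] [Fintype Y] [DecidableEq X] [DecidableEq Y]
    (F : X → Y → ℝ)
    (hprob : ∀ x, (∀ y, 0 ≤ F x y) ∧ ∑ y, F x y = 1)
    (K : ℕ) (ε : ℝ)
    (hinv : ∃ g : List X → Y → Option X, ∀ S : List X, S.length ≤ K →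
      ∀ x ∈ S, 1 - ε ≤ ∑ y, if g S y = some x then F x y else 0) :
    ∀ S : Finset X, S.Nonempty → S.card ≤ K →
      ∑ y, max 0 ((∑ x ∈ S, F x y) / S.card - 1 / S.card) ≤ ε := by
  obtain ⟨g, hg⟩ := hinv
  intro S hne hcard
  have hn0 : (0:ℝ) < (S.card : ℝ) := by exact_mod_cast Finset.card_pos.mpr hne
  set L := S.toList with hL
  have hLlen : L.length ≤ K := by simpa [hL] using hcard
  have hgS := hg L hLlen
  have hF1 : ∀ x y, F x y ≤ 1 := by
    intro x y
    calc F x y ≤ ∑ y', F x y' :=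
          Finset.single_le_sum (fun y' _ => (hprob x).1 y') (Finset.mem_univ y)
    _ = 1 := (hprob x).2
  have key : ∀ y, max 0 ((∑ x ∈ S, F x y) / S.card - 1 / S.card)
      ≤ (∑ x ∈ S, (if g L y = some x then 0 else F x y)) / S.card := by
    intro y
    have hA0 : 0 ≤ ∑ x ∈ S, (if g L y = some x then 0 else F x y) :=
      Finset.sum_nonneg fun x _ => by
        by_cases h : g L y = some x <;> simp [h, (hprob x).1 y]
    have hM : (∑ x ∈ S, if g L y = some x then F x y else 0) ≤ 1 := by
      cases ho : g L y with
      | none => simp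
      | some x₀ =>
        rw [show (∑ x ∈ S, if some x₀ = some x then F x y else 0)
            = if x₀ ∈ S then F x₀ y else 0 by
          simp [Option.some_inj, Finset.sum_ite_eq]]
        split
        · exact hF1 x₀ y
        · norm_num
    have hsplit : (∑ x ∈ S, (if g L y = some x then 0 else F x y))
        = (∑ x ∈ S, F x y) - ∑ x ∈ S, (if g L y = some x then F x y else 0) := by
      rw [← Finset.sum_sub_distrib]
      refine Finset.sum_congr rfl fun x _ => ?_
      by_cases h : g L y = some x <;> simp [h]
    have hTA : (∑ x ∈ S, F x y) - 1 ≤ ∑ x ∈ S, (if g L y = some x then 0 else F x y) := by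
      rw [hsplit]; linarith
    refine max_le (div_nonneg hA0 hn0.le) ?_
    rw [div_sub_div_same]
    exact div_le_div_of_nonneg_right hTA hn0.le |>.trans_eq rfl
  calc ∑ y, max 0 ((∑ x ∈ S, F x y) / S.card - 1 / S.card)
      ≤ ∑ y, (∑ x ∈ S, (if g L y = some x then 0 else F x y)) / S.card :=
        Finset.sum_le_sum fun y _ => key y
    _ = (∑ x ∈ S, ∑ y, (if g L y = some x then 0 else F x y)) / S.card := by
        rw [← Finset.sum_div, Finset.sum_comm]
    _ ≤ (∑ x ∈ S, ε) / S.card := by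
        apply div_le_div_of_nonneg_right ?_ hn0.le |>.trans_eq rfl
        refine Finset.sum_le_sum fun x hx => ?_
        have hx' : x ∈ L := by simpa [hL] using hx
        have h1 := hgS x hx'
        have hsp : (∑ y, (if g L y = some x then 0 else F x y))
            = (∑ y, F x y) - ∑ y, (if g L y = some x then F x y else 0) := by
          rw [← Finset.sum_sub_distrib]
          refine Finset.sum_congr rfl fun y _ => ?_
          by_cases h : g L y = some x <;> simp [h]
        rw [hsp, (hprob x).2]; linarith
    _ = ε := by
        rw [Finset.sum_const, nsmul_eq_mul]
        field_simp
end

section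
/- Let Y be a random variable taking values in a finite set of size at least K. Then Y is within statistical distance ε of some random variable with min-entropy at least log K if and only if the (1/K)-excess of Y is at most ε. -/
/-!
Write `c = 1/K`. For `q ≤ c` pointwise, the statistical distance from `p` is the total positive
part of `p - q`, which dominates the total positive part of `p - c`, i.e. the `c`-excess.
Conversely, truncating `p` at `c` leaves a function of mass `1 - excess` that can be raised back
to mass `1` without exceeding `c`, because `|Y| · c ≥ 1`; the result differs from `p` only by
the removed excess.
-/

open Finset

section StatisticalDistance

variable {Y : Type*} [Fintype Y]

theorem sum_sub_sum_le_sum_max_zero_sub (f g : Y → ℝ) (T : Finset Y) :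
    ∑ y ∈ T, f y - ∑ y ∈ T, g y ≤ ∑ y, max 0 (f y - g y) := by
  rw [← sum_sub_distrib]
  calc ∑ y ∈ T, (f y - g y) ≤ ∑ y ∈ T, max 0 (f y - g y) :=
        sum_le_sum fun y _ => le_max_right _ _
    _ ≤ ∑ y, max 0 (f y - g y) :=
        sum_le_sum_of_subset_of_nonneg (subset_univ T) fun y _ _ => le_max_left _ _

theorem sum_max_zero_sub_comm {f g : Y → ℝ} (h : ∑ y, f y = ∑ y, g y) :
    ∑ y, max 0 (g y - f y) = ∑ y, max 0 (f y - g y) := by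
  have hpoint : ∀ y, max 0 (g y - f y) = max 0 (f y - g y) + (g y - f y) := by
    intro y
    rcases le_total (f y) (g y) with hle | hle
    · rw [max_eq_right (by linarith), max_eq_left (by linarith)]; ring
    · rw [max_eq_left (by linarith), max_eq_right (by linarith)]; ring
  rw [sum_congr rfl fun y _ => hpoint y, sum_add_distrib, sum_sub_distrib, h, sub_self,
    add_zero]

theorem exists_sum_sub_sum_eq_sum_max_zero_sub (f g : Y → ℝ) :
    ∃ T : Finset Y, ∑ y ∈ T, f y - ∑ y ∈ T, g y = ∑ y, max 0 (f y - g y) := by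
  refine ⟨univ.filter fun y => g y < f y, ?_⟩
  rw [← sum_sub_distrib, sum_filter]
  refine sum_congr rfl fun y _ => ?_
  split_ifs with hlt
  · exact (max_eq_right (by linarith)).symm
  · exact (max_eq_left (by linarith)).symm

theorem forall_abs_sum_sub_sum_le_iff {f g : Y → ℝ} (h : ∑ y, f y = ∑ y, g y) (ε : ℝ) :
    (∀ T : Finset Y, |∑ y ∈ T, f y - ∑ y ∈ T, g y| ≤ ε) ↔ ∑ y, max 0 (f y - g y) ≤ ε := by
  constructor
  · intro hdist
    obtain ⟨T, hT⟩ := exists_sum_sub_sum_eq_sum_max_zero_sub f g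
    exact hT ▸ (le_abs_self _).trans (hdist T)
  · intro hε T
    rw [abs_le]
    have hgf := sum_sub_sum_le_sum_max_zero_sub g f T
    rw [sum_max_zero_sub_comm h] at hgf
    constructor <;> linarith [sum_sub_sum_le_sum_max_zero_sub f g T]

end StatisticalDistance

theorem exists_le_le_sum_eq {Y : Type*} [Fintype Y] {m : Y → ℝ} {c s : ℝ}
    (hm : ∀ y, m y ≤ c) (hlow : ∑ y, m y ≤ s) (hhigh : s ≤ Fintype.card Y * c) :
    ∃ q : Y → ℝ, (∀ y, m y ≤ q y) ∧ (∀ y, q y ≤ c) ∧ ∑ y, q y = s := by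
  have hslack : ∑ y, (c - m y) = Fintype.card Y * c - ∑ y, m y := by
    rw [sum_sub_distrib, sum_const, card_univ, nsmul_eq_mul]
  set slack := ∑ y, (c - m y)
  -- when `slack = 0`, also `s = ∑ m` and `t = 0 / 0 = 0`
  set t := (s - ∑ y, m y) / slack
  have ht0 : 0 ≤ t := div_nonneg (by linarith) (by linarith)
  have ht1 : t ≤ 1 := div_le_one_of_le₀ (by linarith) (by linarith)
  refine ⟨fun y => m y + t * (c - m y), fun y => ?_, fun y => ?_, ?_⟩
  · nlinarith [hm y]
  · nlinarith [hm y]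
  · rw [sum_add_distrib, ← mul_sum, div_mul_cancel_of_imp fun h0 => by linarith]
    ring

theorem stmt_5_general {Y : Type*} [Fintype Y]
    (p : Y → ℝ) (hp : ∀ y, 0 ≤ p y) (hsum : ∑ y, p y = 1)
    (K : ℕ) (hK : 0 < K) (hcard : K ≤ Fintype.card Y) (ε : ℝ) :
    (∃ q : Y → ℝ, (∀ y, 0 ≤ q y) ∧ ∑ y, q y = 1 ∧ (∀ y, q y ≤ 1 / K) ∧
        ∀ T : Finset Y, |∑ y ∈ T, p y - ∑ y ∈ T, q y| ≤ ε) ↔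
      ∑ y, max 0 (p y - 1 / K) ≤ ε := by
  constructor
  · rintro ⟨q, -, hqsum, hqc, hdist⟩
    rw [forall_abs_sum_sub_sum_le_iff (hsum.trans hqsum.symm)] at hdist
    exact (sum_le_sum fun y _ => max_le_max le_rfl (by linarith [hqc y])).trans hdist
  · intro hexcess
    have hmass : (1 : ℝ) ≤ Fintype.card Y * (1 / K) := by
      rw [← div_eq_mul_one_div, one_le_div (by positivity)]
      exact_mod_cast hcard
    obtain ⟨q, hmq, hqc, hqsum⟩ := exists_le_le_sum_eq (m := fun y => min (p y) (1 / K))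
      (fun y => min_le_right _ _) (hsum ▸ sum_le_sum fun y _ => min_le_left _ _) hmass
    refine ⟨q, fun y => (le_min (hp y) (by positivity)).trans (hmq y), hqsum, hqc, ?_⟩
    rw [forall_abs_sum_sub_sum_le_iff (hsum.trans hqsum.symm)]
    refine (sum_le_sum fun y _ => max_le (le_max_left _ _) ?_).trans hexcess
    have := hmq y
    rcases min_choice (p y) (1 / K) with h | h <;> rw [h] at this <;>
      linarith [le_max_left 0 (p y - 1 / K), le_max_right 0 (p y - 1 / K)]

theorem stmt_5 {Y : Type*} [Fintype Y]
    (p : Y → ℝ) (hp : ∀ y, 0 ≤ p y) (hsum : ∑ y, p y = 1)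
    (K : ℕ) (hK : 0 < K) (hcard : K ≤ Fintype.card Y) (ε : ℝ) (hε : 0 ≤ ε) :
    (∃ q : Y → ℝ, (∀ y, 0 ≤ q y) ∧ ∑ y, q y = 1 ∧ (∀ y, q y ≤ 1 / K) ∧
        ∀ T : Finset Y, |∑ y ∈ T, p y - ∑ y ∈ T, q y| ≤ ε) ↔
      ∑ y, max 0 (p y - 1 / K) ≤ ε :=
  stmt_5_general p hp hsum K hK hcard ε
end

section
/- Every probability distribution on a finite set whose probabilities are all at most 1/K can be written as a convex combination (mixture) of uniform distributions on K-element subsets. -/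
/-!
Distributions bounded by `1 / K` form a compact convex polytope, so by Krein–Milman it is the
convex hull of its extreme points. An extreme point `P` has no coordinate strictly between `0`
and `1 / K`: if all other coordinates were `0` or `1 / K`, then `K * P x` would be an integer
in `(0, 1)`, so a second such coordinate `y` exists, and moving a little mass between `x` and
`y` in either direction stays in the polytope. Hence every extreme point is uniform on a
`K`-element set.
-/

open Finset

lemma Finset.sum_eq_card_filter_nsmul_of_forall_eq_zero_or_eq {ι M : Type*} [AddCommMonoid M]
    [DecidableEq M] (t : Finset ι) (f : ι → M) (c : M) (h : ∀ i ∈ t, f i = 0 ∨ f i = c) :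
    ∑ i ∈ t, f i = #(t.filter (f · = c)) • c := by
  rw [← sum_filter_add_sum_filter_not t (f · = c), sum_congr rfl fun i hi => (mem_filter.1 hi).2,
    sum_const, sum_eq_zero fun i hi => ?_, add_zero]
  obtain ⟨hit, hic⟩ := mem_filter.1 hi
  exact (h i hit).resolve_right hic

section

variable {𝕜 E : Type*} [Field 𝕜] [LinearOrder 𝕜] [IsStrictOrderedRing 𝕜] [AddCommGroup E]
  [Module 𝕜 E]

lemma eq_zero_of_add_mem_of_sub_mem_of_mem_extremePoints {A : Set E} {x d : E}
    (hx : x ∈ A.extremePoints 𝕜) (hadd : x + d ∈ A) (hsub : x - d ∈ A) : d = 0 := by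
  have hseg : x ∈ openSegment 𝕜 (x + d) (x - d) :=
    ⟨1 / 2, 1 / 2, by norm_num, by norm_num, by norm_num, by module⟩
  simpa using ((mem_extremePoints.1 hx).2 _ hadd _ hsub hseg).1

lemma exists_weights_of_mem_convexHull_image {ι : Type*} [Fintype ι] [DecidableEq ι]
    [DecidableEq E] {t : Finset ι} {v : ι → E} (hv : Set.InjOn v t) {x : E}
    (hx : x ∈ convexHull 𝕜 ↑(t.image v)) :
    ∃ w : ι → 𝕜, (∀ i, 0 ≤ w i) ∧ (∀ i, w i ≠ 0 → i ∈ t) ∧ ∑ i, w i = 1 ∧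
      ∑ i, w i • v i = x := by
  obtain ⟨w, hw₀, hw₁, hwx⟩ := Finset.mem_convexHull'.1 hx
  refine ⟨fun i => if i ∈ t then w (v i) else 0, fun i => ?_, fun i hi => ?_, ?_, ?_⟩
  · dsimp only
    split_ifs with hi
    exacts [hw₀ _ (mem_image_of_mem v hi), le_rfl]
  · by_contra hit
    simp [hit] at hi
  · rw [sum_ite_mem, univ_inter, ← hw₁, sum_image hv]
  · simp only [ite_smul, zero_smul]
    rw [sum_ite_mem, univ_inter, ← hwx, sum_image hv]

end

section

variable {X : Type*}

noncomputable def uniformDist [DecidableEq X] (K : ℕ) (S : Finset X) : X → ℝ :=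
  fun x => if x ∈ S then (1 : ℝ) / K else 0

lemma uniformDist_injective [DecidableEq X] {K : ℕ} (hK : 0 < K) :
    Function.Injective (uniformDist (X := X) K) := by
  have hK' : (1 : ℝ) / K ≠ 0 := by positivity
  intro S T h
  ext x
  have hx := congrFun h x
  by_cases hS : x ∈ S <;> by_cases hT : x ∈ T <;>
    simp only [uniformDist, hS, hT, if_true, if_false] at hx ⊢
  exacts [absurd hx hK', absurd hx.symm hK']

variable [Fintype X]

variable (X) in
def cappedSimplex (K : ℕ) : Set (X → ℝ) :=
  Set.univ.pi (fun _ => Set.Icc 0 (1 / K)) ∩ {P | ∑ x, P x = 1}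

lemma isCompact_cappedSimplex (K : ℕ) : IsCompact (cappedSimplex X K) :=
  (isCompact_univ_pi fun _ => isCompact_Icc).inter_right
    (isClosed_eq (continuous_finsetSum _ fun x _ => continuous_apply x) continuous_const)

lemma convex_cappedSimplex (K : ℕ) : Convex ℝ (cappedSimplex X K) := by
  refine (convex_pi fun _ _ => convex_Icc _ _).inter fun P hP Q hQ a b _ _ hab => ?_
  simp_all [sum_add_distrib, ← mul_sum]

lemma exists_ne_pos_lt_of_mem_cappedSimplex {K : ℕ} {P : X → ℝ} (hP : P ∈ cappedSimplex X K)
    {x : X} (hx₀ : 0 < P x) (hx₁ : P x < 1 / K) : ∃ y ≠ x, 0 < P y ∧ P y < 1 / K := by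
  classical
  by_contra! h
  have hK : (0 : ℝ) < K := one_div_pos.1 (hx₀.trans hx₁)
  have hrest : ∀ y ∈ univ.erase x, P y = 0 ∨ P y = 1 / K := fun y hyx => by
    obtain ⟨hy₀, hy₁⟩ := hP.1 y (Set.mem_univ y)
    rcases hy₀.eq_or_lt with hy | hy
    exacts [.inl hy.symm, .inr (hy₁.antisymm (h y (ne_of_mem_erase hyx) hy))]
  have hsum := add_sum_erase univ P (mem_univ x)
  rw [sum_eq_card_filter_nsmul_of_forall_eq_zero_or_eq _ _ _ hrest, hP.2, nsmul_eq_mul] at hsum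
  set m := #((univ.erase x).filter (P · = 1 / K))
  have hint : (K : ℝ) * P x = ((K - m : ℤ) : ℝ) := by
    push_cast
    field_simp at hsum
    linarith
  have h₀ : (0 : ℤ) < K - m := by exact_mod_cast hint ▸ mul_pos hK hx₀
  have h₁ : (K : ℤ) - m < 1 := by
    have : (K : ℝ) * P x < 1 := by rwa [lt_div_iff₀' hK] at hx₁
    exact_mod_cast hint ▸ this
  omega

lemma add_smul_single_sub_single_mem_cappedSimplex [DecidableEq X] {K : ℕ} {P : X → ℝ}
    (hP : P ∈ cappedSimplex X K) {x y : X} (hxy : x ≠ y) {t : ℝ}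
    (hx : P x + t ∈ Set.Icc 0 (1 / (K : ℝ))) (hy : P y - t ∈ Set.Icc 0 (1 / (K : ℝ))) :
    P + t • (Pi.single x 1 - Pi.single y 1) ∈ cappedSimplex X K := by
  refine ⟨fun z _ => ?_, ?_⟩
  · by_cases hzx : z = x
    · subst hzx; simpa [hxy] using hx
    by_cases hzy : z = y
    · subst hzy; simpa [hzx, sub_eq_add_neg] using hy
    simpa [hzx, hzy] using hP.1 z (Set.mem_univ z)
  · simpa [sum_add_distrib, ← mul_sum] using hP.2

lemma eq_zero_or_eq_of_mem_extremePoints_cappedSimplex {K : ℕ} {P : X → ℝ}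
    (hP : P ∈ (cappedSimplex X K).extremePoints ℝ) (x : X) : P x = 0 ∨ P x = 1 / K := by
  classical
  by_contra! hx
  obtain ⟨hx₀, hx₁⟩ := hP.1.1 x (Set.mem_univ x)
  replace hx₀ := hx₀.lt_of_ne' hx.1
  replace hx₁ := hx₁.lt_of_ne hx.2
  obtain ⟨y, hyx, hy₀, hy₁⟩ := exists_ne_pos_lt_of_mem_cappedSimplex hP.1 hx₀ hx₁
  set ε := min (min (P x) (1 / K - P x)) (min (P y) (1 / K - P y))
  have hε : 0 < ε := lt_min (lt_min hx₀ (by linarith)) (lt_min hy₀ (by linarith))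
  have hε_le : ε ≤ min (min (P x) (1 / K - P x)) (min (P y) (1 / K - P y)) := le_rfl
  simp only [le_min_iff] at hε_le
  have hmem (t : ℝ) (ht : |t| ≤ ε) :
      P + t • (Pi.single x 1 - Pi.single y 1) ∈ cappedSimplex X K := by
    obtain ⟨ht₁, ht₂⟩ := abs_le.1 ht
    refine add_smul_single_sub_single_mem_cappedSimplex hP.1 hyx.symm ⟨?_, ?_⟩ ⟨?_, ?_⟩ <;>
      linarith
  have hd := eq_zero_of_add_mem_of_sub_mem_of_mem_extremePoints hP (hmem ε (abs_of_pos hε).le)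
    (by rw [sub_eq_add_neg, ← neg_smul]; exact hmem (-ε) (by rw [abs_neg, abs_of_pos hε]))
  have hdx := congrFun hd x
  simp only [Pi.smul_apply, Pi.sub_apply, Pi.single_eq_same, Pi.single_eq_of_ne hyx.symm,
    sub_zero, smul_eq_mul, mul_one, Pi.zero_apply] at hdx
  exact hε.ne' hdx

lemma exists_eq_uniformDist_of_mem_extremePoints [DecidableEq X] {K : ℕ} {P : X → ℝ}
    (hP : P ∈ (cappedSimplex X K).extremePoints ℝ) :
    ∃ S : Finset X, #S = K ∧ P = uniformDist K S := by
  have hval := eq_zero_or_eq_of_mem_extremePoints_cappedSimplex hP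
  have hsum := sum_eq_card_filter_nsmul_of_forall_eq_zero_or_eq univ P _ fun x _ => hval x
  rw [hP.1.2, nsmul_eq_mul] at hsum
  refine ⟨univ.filter (P · = 1 / K), ?_, funext fun x => ?_⟩
  · have hK : (K : ℝ) ≠ 0 := by
      rintro hK
      simp [hK] at hsum
    rw [mul_one_div, eq_div_iff hK, one_mul] at hsum
    exact_mod_cast hsum.symm
  · simp only [uniformDist, mem_filter, mem_univ, true_and]
    split_ifs with hx
    exacts [hx, (hval x).resolve_right hx]

variable (X) in
noncomputable def uniformDists [DecidableEq X] (K : ℕ) : Finset (X → ℝ) :=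
  (powersetCard K univ).image (uniformDist K)

lemma cappedSimplex_subset_convexHull_uniformDists [DecidableEq X] (K : ℕ) :
    cappedSimplex X K ⊆ convexHull ℝ ↑(uniformDists X K) :=
  calc cappedSimplex X K
      = closure (convexHull ℝ ((cappedSimplex X K).extremePoints ℝ)) :=
        (closure_convexHull_extremePoints (isCompact_cappedSimplex K) (convex_cappedSimplex K)).symm
    _ ⊆ closure (convexHull ℝ ↑(uniformDists X K)) := by
        refine closure_mono (convexHull_mono fun P hP => ?_)
        obtain ⟨S, hS, rfl⟩ := exists_eq_uniformDist_of_mem_extremePoints hP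
        exact mem_coe.2 (mem_image_of_mem _ (mem_powersetCard_univ.2 hS))
    _ = convexHull ℝ ↑(uniformDists X K) :=
        ((finite_toSet _).isClosed_convexHull ℝ).closure_eq

end

theorem stmt_6_general {X : Type*} [Fintype X] [DecidableEq X]
    (K : ℕ) (hK : 0 < K)
    (P : X → ℝ) (hP : ∀ x, 0 ≤ P x) (hsum : ∑ x, P x = 1)
    (hbound : ∀ x, P x ≤ 1 / K) :
    ∃ w : Finset X → ℝ, (∀ S, 0 ≤ w S) ∧ (∀ S, w S ≠ 0 → S.card = K) ∧
      (∑ S : Finset X, w S) = 1 ∧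
      ∀ x, P x = ∑ S : Finset X, w S * (if x ∈ S then (1 : ℝ) / K else 0) := by
  obtain ⟨w, hw₀, hw_supp, hw₁, hwP⟩ :=
    exists_weights_of_mem_convexHull_image (uniformDist_injective hK).injOn
      (cappedSimplex_subset_convexHull_uniformDists K ⟨fun x _ => ⟨hP x, hbound x⟩, hsum⟩)
  refine ⟨w, hw₀, fun S hS => mem_powersetCard_univ.1 (hw_supp S hS), hw₁, fun x => ?_⟩
  rw [← hwP, Finset.sum_apply]
  simp only [Pi.smul_apply, smul_eq_mul, uniformDist]

theorem stmt_6 {X : Type*} [Fintype X] [DecidableEq X]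
    (K : ℕ) (hK : 0 < K) (hcard : K ≤ Fintype.card X)
    (P : X → ℝ) (hP : ∀ x, 0 ≤ P x) (hsum : ∑ x, P x = 1)
    (hbound : ∀ x, P x ≤ 1 / K) :
    ∃ w : Finset X → ℝ, (∀ S, 0 ≤ w S) ∧ (∀ S, w S ≠ 0 → S.card = K) ∧
      (∑ S : Finset X, w S) = 1 ∧
      ∀ x, P x = ∑ S : Finset X, w S * (if x ∈ S then (1 : ℝ) / K else 0) :=
  stmt_6_general K hK P hP hsum hbound
end

section
/- Any finite set S ⊆ 𝒳₁ × 𝒳₂ such that |S| ≤ K₁K₂, each second-coordinate fiber of S has size at most K₁, and each first-coordinate fiber has size at most K₂, can be partitioned into K₂ parts R₁, ..., R_{K₂} such that each part has size at most K₁ and each part contains at most one pair with any given first coordinate. -/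
/-!
Order the first coordinates arbitrarily and list `S` so that pairs with the same first coordinate
are consecutive, then deal the list out to `K₂` parts in turn: the element at position `n` goes to
part `n % K₂`. A fibre `{x₁} × _` occupies a window of at most `K₂` consecutive positions, so its
elements land in distinct parts; and since there are at most `K₁ K₂` positions, each residue class
mod `K₂` is hit at most `K₁` times.
-/

open Finset Function

namespace Finset

section Rank

variable {α β : Type*} [LinearOrder α] {s : Finset α} {a b : α}

theorem card_filter_lt_lt_card (ha : a ∈ s) : #{c ∈ s | c < a} < #s :=
  card_lt_card (filter_ssubset.2 ⟨a, ha, lt_irrefl a⟩)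

theorem strictMonoOn_card_filter_lt : StrictMonoOn (fun a => #{c ∈ s | c < a}) s := by
  intro a ha b _ hab
  refine card_lt_card ((ssubset_iff_of_subset ?_).2 ⟨a, mem_filter.2 ⟨ha, hab⟩, by simp⟩)
  intro c hc
  simp only [mem_filter] at hc ⊢
  exact ⟨hc.1, hc.2.trans hab⟩

theorem card_filter_lt_lt_add_card_filter_eq [PartialOrder β] [DecidableEq β] {f : α → β}
    (hf : Monotone f) (hb : b ∈ s) (hba : f b = f a) :
    #{c ∈ s | c < b} < #{c ∈ s | c < a} + #{c ∈ s | f c = f a} := by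
  have hb' : b ∈ {c ∈ s | f c = f a} := mem_filter.2 ⟨hb, hba⟩
  have hsub : {c ∈ s | c < b} ⊆ {c ∈ s | c < a} ∪ {c ∈ s | f c = f a}.erase b := by
    intro c hc
    obtain ⟨hcs, hcb⟩ := mem_filter.1 hc
    rcases lt_or_ge c a with hca | hac
    · exact mem_union_left _ (mem_filter.2 ⟨hcs, hca⟩)
    · refine mem_union_right _ (mem_erase.2 ⟨hcb.ne, mem_filter.2 ⟨hcs, ?_⟩⟩)
      exact le_antisymm (hba ▸ hf hcb.le) (hf hac)
  calc #{c ∈ s | c < b}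
      ≤ #{c ∈ s | c < a} + #({c ∈ s | f c = f a}.erase b) :=
        (card_le_card hsub).trans (card_union_le _ _)
    _ < #{c ∈ s | c < a} + #{c ∈ s | f c = f a} := by
        rw [card_erase_of_mem hb']
        have := card_pos.2 ⟨b, hb'⟩
        omega

end Rank

theorem _root_.exists_linearOrder_monotone {α β : Type*} [LinearOrder β] (f : α → β) :
    ∃ _ : LinearOrder α, Monotone f := by
  obtain ⟨_, -⟩ := exists_wellFoundedLT α
  exact ⟨LinearOrder.lift' (fun a => toLex (f a, a)) fun a b h => congrArg (·.2) h,
    fun a b hab => Prod.Lex.monotone_fst _ _ hab⟩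

theorem exists_injOn_fiberwise_consecutive {α β : Type*} [DecidableEq β] (f : α → β)
    (s : Finset α) :
    ∃ idx : α → ℕ, Set.InjOn idx s ∧ (∀ a ∈ s, idx a < #s) ∧
      ∀ a, ∀ b ∈ s, f b = f a → idx b < idx a + #{c ∈ s | f c = f a} := by
  obtain ⟨_, -⟩ := exists_wellFoundedLT β
  obtain ⟨_, hf⟩ := exists_linearOrder_monotone f
  refine ⟨fun a => #{c ∈ s | c < a}, strictMonoOn_card_filter_lt.injOn,
    fun a ha => card_filter_lt_lt_card ha, fun a b hb hba => ?_⟩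
  exact card_filter_lt_lt_add_card_filter_eq hf hb hba

section Partition

variable {α β : Type*} {s : Finset α} {idx : α → ℕ} {m k : ℕ}

theorem card_filter_mod_eq_le (hinj : Set.InjOn idx s) (hlt : ∀ a ∈ s, idx a < m * k)
    (r : ℕ) : #{a ∈ s | idx a % k = r} ≤ m := by
  refine (card_le_card_of_injOn (fun a => idx a / k) (fun a ha => ?_) fun a ha b hb hab => ?_).trans
    (card_range m).le
  · exact mem_coe.2 (mem_range.2 (Nat.div_lt_of_lt_mul (mul_comm m k ▸ hlt a (mem_filter.1 ha).1)))
  · obtain ⟨has, har⟩ := mem_filter.1 ha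
    obtain ⟨hbs, hbr⟩ := mem_filter.1 hb
    refine hinj has hbs ?_
    rw [← Nat.div_add_mod (idx a) k, ← Nat.div_add_mod (idx b) k, har, hbr]
    exact congrArg (k * · + r) hab

theorem exists_partition_injOn_of_card_filter_le [DecidableEq α] [DecidableEq β] (f : α → β)
    (hs : #s ≤ m * k) (hfib : ∀ y, #{a ∈ s | f a = y} ≤ k) :
    ∃ R : Fin k → Finset α, Pairwise (Disjoint on R) ∧ univ.biUnion R = s ∧
      (∀ i, #(R i) ≤ m) ∧ ∀ i, Set.InjOn f (R i) := by
  obtain ⟨idx, hinj, hlt, hclose⟩ := s.exists_injOn_fiberwise_consecutive f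
  have hlt' : ∀ a ∈ s, idx a < m * k := fun a ha => (hlt a ha).trans_le hs
  refine ⟨fun i => {a ∈ s | idx a % k = i}, fun i j hij => ?_, ?_,
    fun i => card_filter_mod_eq_le hinj hlt' i, fun i a ha b hb hab => ?_⟩
  · exact disjoint_filter.2 fun a _ hi hj => hij (Fin.ext (hi.symm.trans hj))
  · ext a
    simp only [mem_biUnion, mem_univ, true_and, mem_filter]
    refine ⟨fun ⟨_, has, _⟩ => has, fun has => ?_⟩
    have hk : 0 < k := Nat.pos_of_mul_pos_left (Nat.zero_lt_of_lt (hlt' a has))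
    exact ⟨⟨idx a % k, Nat.mod_lt _ hk⟩, has, rfl⟩
  · obtain ⟨has, hai⟩ := mem_filter.1 ha
    obtain ⟨hbs, hbi⟩ := mem_filter.1 hb
    refine hinj has hbs (Nat.ModEq.eq_of_abs_lt (hai.trans hbi.symm) (abs_sub_lt_iff.2 ?_))
    have := hclose a b hbs hab.symm
    have := hclose b a has hab
    have := hfib (f a)
    have := hfib (f b)
    omega

end Partition

end Finset

theorem stmt_8_general {X₁ X₂ : Type*} [DecidableEq X₁] [DecidableEq X₂]
    (K₁ K₂ : ℕ)
    (S : Finset (X₁ × X₂))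
    (hS : S.card ≤ K₁ * K₂)
    (hfib1 : ∀ x₁, (S.filter (fun z => z.1 = x₁)).card ≤ K₂) :
    ∃ R : Fin K₂ → Finset (X₁ × X₂),
      (∀ i j, i ≠ j → Disjoint (R i) (R j)) ∧
      Finset.univ.biUnion R = S ∧
      (∀ i, (R i).card ≤ K₁) ∧
      (∀ i x₁, ((R i).filter (fun z => z.1 = x₁)).card ≤ 1) := by
  obtain ⟨R, hdisj, hcover, hcard, hinj⟩ := exists_partition_injOn_of_card_filter_le Prod.fst hS hfib1
  refine ⟨R, hdisj, hcover, hcard, fun i x₁ => card_le_one.2 fun z hz w hw => ?_⟩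
  rw [mem_filter] at hz hw
  exact hinj i hz.1 hw.1 (hz.2.trans hw.2.symm)

theorem stmt_8 {X₁ X₂ : Type*} [DecidableEq X₁] [DecidableEq X₂]
    (K₁ K₂ : ℕ) (hK₁ : 0 < K₁) (hK₂ : 0 < K₂)
    (S : Finset (X₁ × X₂))
    (hS : S.card ≤ K₁ * K₂)
    (hfib2 : ∀ x₂, (S.filter (fun z => z.2 = x₂)).card ≤ K₁)
    (hfib1 : ∀ x₁, (S.filter (fun z => z.1 = x₁)).card ≤ K₂) :
    ∃ R : Fin K₂ → Finset (X₁ × X₂),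
      (∀ i j, i ≠ j → Disjoint (R i) (R j)) ∧
      Finset.univ.biUnion R = S ∧
      (∀ i, (R i).card ≤ K₁) ∧
      (∀ i x₁, ((R i).filter (fun z => z.1 = x₁)).card ≤ 1) :=
  stmt_8_general K₁ K₂ S hS hfib1
end

section
/- Let S be a set of ℓ-tuples with K-small slices (where K = (K₁,...,K_ℓ)), and fix x ∈ S. Suppose each coordinate j ∈ [ℓ] is independently assigned a random hash value: each element of 𝒳_j is mapped independently and uniformly to one of (ℓ/ε)·K_j bins. Then the probability that some z ∈ S with z ≠ x agrees with x on all ℓ hash values (i.e., for each j, z_j and x_j land in the same bin) is at most ε·e, where e = exp(1). -/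
open Finset

private lemma lemA {α : Type*} [Fintype α] [DecidableEq α] (b : ℕ) {a c : α} (hac : a ≠ c) :
    (Finset.univ.filter (fun g : α → Fin b => g a = g c)).card * b = b ^ Fintype.card α := by
  classical
  have e : {g : α → Fin b // g a = g c} × Fin b ≃ (α → Fin b) :=
  { toFun := fun p => Function.update p.1.1 c p.2
    invFun := fun g => (⟨Function.update g c (g a), by
        simp [Function.update_of_ne hac]⟩, g c)
    left_inv := by
      rintro ⟨⟨g, hg⟩, v⟩
      refine Prod.ext (Subtype.ext ?_) ?_
      · simp [Function.update_of_ne hac, Function.update_idem, hg]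
      · simp
    right_inv := by
      intro g
      simp [Function.update_idem] }
  have h1 : Fintype.card ({g : α → Fin b // g a = g c} × Fin b) = Fintype.card (α → Fin b) :=
    Fintype.card_congr e
  simpa [Fintype.card_prod, Fintype.card_subtype, Fintype.card_fun] using h1

private lemma lemB {ℓ : ℕ} {X : Fin ℓ → Type*} [∀ j, Fintype (X j)] [∀ j, DecidableEq (X j)]
    (B : Fin ℓ → ℕ) (z x : ∀ j, X j) (J : Finset (Fin ℓ))
    (hJ : ∀ j, j ∈ J ↔ z j = x j) :
    (Finset.univ.filter (fun h : ∀ j, X j → Fin (B j) => ∀ j, h j (z j) = h j (x j))).card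
      * ∏ j ∈ Jᶜ, B j
    = Fintype.card (∀ j, X j → Fin (B j)) := by
  classical
  have hc : (Finset.univ.filter
        (fun h : ∀ j, X j → Fin (B j) => ∀ j, h j (z j) = h j (x j))).card
      = ∏ j, (Finset.univ.filter (fun g : X j → Fin (B j) => g (z j) = g (x j))).card := by
    calc (Finset.univ.filter
        (fun h : ∀ j, X j → Fin (B j) => ∀ j, h j (z j) = h j (x j))).card
        = Fintype.card {h : ∀ j, X j → Fin (B j) // ∀ j, h j (z j) = h j (x j)} :=
          (Fintype.card_subtype _).symm
      _ = Fintype.card (∀ j, {g : X j → Fin (B j) // g (z j) = g (x j)}) :=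
          Fintype.card_congr (Equiv.subtypePiEquivPi (p := fun j (g : X j → Fin (B j)) => g (z j) = g (x j)))
      _ = ∏ j, Fintype.card {g : X j → Fin (B j) // g (z j) = g (x j)} := Fintype.card_pi
      _ = _ := by simp [Fintype.card_subtype]
  rw [hc, ← Finset.prod_mul_prod_compl J
    (fun j => (Finset.univ.filter (fun g : X j → Fin (B j) => g (z j) = g (x j))).card),
    mul_assoc, ← Finset.prod_mul_distrib]
  have h1 : ∀ j ∈ J, (Finset.univ.filter
      (fun g : X j → Fin (B j) => g (z j) = g (x j))).card = (B j) ^ Fintype.card (X j) := by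
    intro j hj
    have hz : z j = x j := (hJ j).mp hj
    rw [Finset.filter_true_of_mem (fun g _ => by rw [hz]), Finset.card_univ,
      Fintype.card_fun, Fintype.card_fin]
  have h2 : ∀ j ∈ Jᶜ, (Finset.univ.filter
      (fun g : X j → Fin (B j) => g (z j) = g (x j))).card * B j
      = (B j) ^ Fintype.card (X j) := by
    intro j hj
    have hz : z j ≠ x j := fun h => (Finset.mem_compl.mp hj) ((hJ j).mpr h)
    exact lemA (B j) hz
  rw [Finset.prod_congr rfl h1, Finset.prod_congr rfl h2, Finset.prod_mul_prod_compl]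
  simp [Fintype.card_pi, Fintype.card_fun]

open scoped Classical in
theorem stmt_9 (ℓ : ℕ) (hℓ : 0 < ℓ) (X : Fin ℓ → Type*)
    [∀ j, Fintype (X j)] [∀ j, DecidableEq (X j)]
    (K : Fin ℓ → ℕ) (ε : ℝ) (hε : 0 < ε)
    (B : Fin ℓ → ℕ) (hB : ∀ j, B j = ⌈((ℓ : ℝ) / ε) * K j⌉₊)
    (S : Finset (∀ j, X j))
    (hslice : ∀ x ∈ S, ∀ J : Finset (Fin ℓ),
      (S.filter (fun z => ∀ j ∈ J, z j = x j)).card ≤ ∏ j ∈ Jᶜ, K j)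
    (x : ∀ j, X j) (hx : x ∈ S) :
    ((Finset.univ.filter (fun h : ∀ j, X j → Fin (B j) =>
        ∃ z ∈ S, z ≠ x ∧ ∀ j, h j (z j) = h j (x j))).card : ℝ) ≤
      ε * Real.exp 1 * Fintype.card (∀ j, X j → Fin (B j)) := by
  classical
  have hexp1 : (1:ℝ) < Real.exp 1 := by
    have := Real.exp_one_gt_d9; nlinarith
  have hN0 : (0:ℝ) ≤ (Fintype.card (∀ j, X j → Fin (B j)) : ℝ) := by positivity
  by_cases htriv : 1 ≤ ε * Real.exp 1
  · calc ((Finset.univ.filter (fun h : ∀ j, X j → Fin (B j) =>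
        ∃ z ∈ S, z ≠ x ∧ ∀ j, h j (z j) = h j (x j))).card : ℝ)
        ≤ (Fintype.card (∀ j, X j → Fin (B j)) : ℝ) := by
          exact_mod_cast (Finset.card_filter_le _ _).trans_eq (Finset.card_univ)
      _ ≤ ε * Real.exp 1 * Fintype.card (∀ j, X j → Fin (B j)) :=
          le_mul_of_one_le_left hN0 htriv
  push_neg at htriv
  have hε1 : ε ≤ 1 := by nlinarith
  have hℓR : (0:ℝ) < (ℓ:ℝ) := by exact_mod_cast hℓ
  -- K positive
  have hK : ∀ j, 0 < K j := by
    intro j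
    by_contra h
    push_neg at h
    have h0 : K j = 0 := Nat.le_zero.mp h
    have h1 := hslice x hx ∅
    rw [Finset.filter_true_of_mem (fun z _ => by simp), Finset.compl_empty] at h1
    have h2 : ∏ j ∈ (Finset.univ : Finset (Fin ℓ)), K j = 0 :=
      Finset.prod_eq_zero (Finset.mem_univ j) h0
    rw [h2, Nat.le_zero, Finset.card_eq_zero] at h1
    rw [h1] at hx
    exact absurd hx (Finset.notMem_empty x)
  have hB1 : ∀ j, 0 < B j := by
    intro j
    rw [hB j]
    refine Nat.ceil_pos.mpr (mul_pos (div_pos hℓR hε) ?_)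
    exact_mod_cast hK j
  have hKB : ∀ j, (K j : ℝ) ≤ ε / ℓ * B j := by
    intro j
    have h1 : ((ℓ:ℝ)/ε) * K j ≤ B j := by rw [hB j]; exact Nat.le_ceil _
    have h2 := mul_le_mul_of_nonneg_left h1 (le_of_lt (div_pos hε hℓR))
    calc (K j : ℝ) = ε / ℓ * ((ℓ:ℝ)/ε * K j) := by field_simp
      _ ≤ ε / ℓ * B j := h2
  set N : ℝ := (Fintype.card (∀ j, X j → Fin (B j)) : ℝ) with hNdef
  set Ez : (∀ j, X j) → Finset (∀ j, X j → Fin (B j)) :=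
    fun z => Finset.univ.filter (fun h => ∀ j, h j (z j) = h j (x j)) with hEzdef
  set Jf : (∀ j, X j) → Finset (Fin ℓ) :=
    fun z => Finset.univ.filter (fun j => z j = x j) with hJfdef
  -- union bound
  have hsub : (Finset.univ.filter (fun h : ∀ j, X j → Fin (B j) =>
        ∃ z ∈ S, z ≠ x ∧ ∀ j, h j (z j) = h j (x j)))
      ⊆ (S.erase x).biUnion Ez := by
    intro h hh
    simp only [Finset.mem_filter, Finset.mem_univ, true_and] at hh
    obtain ⟨z, hzS, hzx, hz⟩ := hh
    exact Finset.mem_biUnion.mpr ⟨z, Finset.mem_erase.mpr ⟨hzx, hzS⟩,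
      by simp [hEzdef, hz]⟩
  have h1 : ((Finset.univ.filter (fun h : ∀ j, X j → Fin (B j) =>
        ∃ z ∈ S, z ≠ x ∧ ∀ j, h j (z j) = h j (x j))).card : ℝ)
      ≤ ∑ z ∈ S.erase x, ((Ez z).card : ℝ) := by
    have := (Finset.card_le_card hsub).trans (Finset.card_biUnion_le)
    exact_mod_cast this
  have h2 : ∑ z ∈ S.erase x, ((Ez z).card : ℝ)
      = ∑ J : Finset (Fin ℓ), ∑ z ∈ (S.erase x).filter (fun z => Jf z = J),
          ((Ez z).card : ℝ) :=
    (Finset.sum_fiberwise _ _ _).symm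
  have h3 : ∀ J : Finset (Fin ℓ),
      ∑ z ∈ (S.erase x).filter (fun z => Jf z = J), ((Ez z).card : ℝ)
        ≤ N * ε * (1/(ℓ:ℝ)) ^ (Jᶜ.card) := by
    intro J
    by_cases hJu : J = Finset.univ
    · have hemp : (S.erase x).filter (fun z => Jf z = J) = ∅ := by
        rw [Finset.filter_eq_empty_iff]
        intro z hz hJf
        have hzx : z = x := by
          funext j
          have hj : j ∈ Jf z := by rw [hJf, hJu]; exact Finset.mem_univ j
          simpa [hJfdef] using hj
        exact (Finset.mem_erase.mp hz).1 hzx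
      rw [hemp, Finset.sum_empty]
      positivity
    · have hJc : 1 ≤ Jᶜ.card := by
        refine Finset.card_pos.mpr ?_
        have : ¬ ∀ a, a ∈ J := fun h => hJu (Finset.eq_univ_iff_forall.mpr h)
        push_neg at this
        obtain ⟨j, hj⟩ := this
        exact ⟨j, Finset.mem_compl.mpr hj⟩
      have hD : (0:ℝ) < ∏ j ∈ Jᶜ, (B j : ℝ) :=
        Finset.prod_pos (fun j _ => by exact_mod_cast hB1 j)
      have hEz : ∀ z ∈ (S.erase x).filter (fun z => Jf z = J),
          ((Ez z).card : ℝ) = N / ∏ j ∈ Jᶜ, (B j : ℝ) := by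
        intro z hz
        rw [Finset.mem_filter] at hz
        have hJz : ∀ j, j ∈ J ↔ z j = x j := by
          intro j; rw [← hz.2]; simp [hJfdef]
        have hb := lemB B z x J hJz
        rw [eq_div_iff (ne_of_gt hD), hNdef, hEzdef]
        push_cast
        exact_mod_cast hb
      rw [Finset.sum_congr rfl hEz, Finset.sum_const, nsmul_eq_mul]
      have hcard : (((S.erase x).filter (fun z => Jf z = J)).card : ℝ)
          ≤ ((∏ j ∈ Jᶜ, K j : ℕ) : ℝ) := by
        have hsub2 : (S.erase x).filter (fun z => Jf z = J)
            ⊆ S.filter (fun z => ∀ j ∈ J, z j = x j) := by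
          intro z hz
          rw [Finset.mem_filter] at hz ⊢
          refine ⟨(Finset.mem_erase.mp hz.1).2, fun j hj => ?_⟩
          rw [← hz.2] at hj
          simpa [hJfdef] using hj
        exact_mod_cast (Finset.card_le_card hsub2).trans (hslice x hx J)
      calc (((S.erase x).filter (fun z => Jf z = J)).card : ℝ)
            * (N / ∏ j ∈ Jᶜ, (B j : ℝ))
          ≤ ((∏ j ∈ Jᶜ, K j : ℕ) : ℝ) * (N / ∏ j ∈ Jᶜ, (B j : ℝ)) := by
            exact mul_le_mul_of_nonneg_right hcard (by positivity)
        _ = N * ∏ j ∈ Jᶜ, ((K j : ℝ) / (B j : ℝ)) := by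
            push_cast
            rw [Finset.prod_div_distrib]
            field_simp
        _ ≤ N * ∏ j ∈ Jᶜ, (ε / (ℓ:ℝ)) := by
            refine mul_le_mul_of_nonneg_left (Finset.prod_le_prod ?_ ?_) (by positivity)
            · intro j _; positivity
            · intro j _
              rw [div_le_div_iff₀ (by exact_mod_cast hB1 j) hℓR]
              have := hKB j
              have hBj : (0:ℝ) < (B j : ℝ) := by exact_mod_cast hB1 j
              calc (K j : ℝ) * ℓ ≤ (ε / ℓ * B j) * ℓ := by
                    exact mul_le_mul_of_nonneg_right this (le_of_lt hℓR)
                _ = ε * B j := by field_simp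
        _ = N * (ε / (ℓ:ℝ)) ^ (Jᶜ.card) := by rw [Finset.prod_const]
        _ ≤ N * ε * (1/(ℓ:ℝ)) ^ (Jᶜ.card) := by
            rw [div_pow, one_div, inv_pow, mul_assoc]
            refine mul_le_mul_of_nonneg_left ?_ (by positivity)
            rw [div_eq_mul_inv]
            refine mul_le_mul_of_nonneg_right ?_ (by positivity)
            calc ε ^ Jᶜ.card ≤ ε ^ 1 := pow_le_pow_of_le_one hε.le hε1 hJc
              _ = ε := pow_one ε
  have h4 : ∑ J : Finset (Fin ℓ), N * ε * (1/(ℓ:ℝ)) ^ (Jᶜ.card)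
      = N * ε * (1 + 1/(ℓ:ℝ)) ^ ℓ := by
    rw [← Finset.mul_sum]
    congr 1
    have e1 : ∑ J : Finset (Fin ℓ), ((1:ℝ)/(ℓ:ℝ)) ^ (Jᶜ.card)
        = ∑ T : Finset (Fin ℓ), ((1:ℝ)/(ℓ:ℝ)) ^ (T.card) :=
      Fintype.sum_bijective compl compl_involutive.bijective _ _ (fun J => rfl)
    rw [e1]
    have e2 := Finset.prod_add (fun _ : Fin ℓ => (1:ℝ)/(ℓ:ℝ))
      (fun _ : Fin ℓ => (1:ℝ)) Finset.univ
    simp only [Finset.prod_const, Finset.card_univ, Fintype.card_fin, one_pow, one_mul,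
      Finset.prod_const_one, mul_one, Finset.powerset_univ] at e2
    rw [add_comm ((1:ℝ)/(ℓ:ℝ)) 1] at e2
    exact e2.symm
  have h5 : (1 + 1/(ℓ:ℝ)) ^ ℓ ≤ Real.exp 1 := by
    have ha : (1:ℝ) + 1/(ℓ:ℝ) ≤ Real.exp (1/(ℓ:ℝ)) := by
      have := Real.add_one_le_exp (1/(ℓ:ℝ)); linarith
    calc (1 + 1/(ℓ:ℝ)) ^ ℓ ≤ Real.exp (1/(ℓ:ℝ)) ^ ℓ :=
          pow_le_pow_left₀ (by positivity) ha ℓ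
      _ = Real.exp ((ℓ:ℝ) * (1/(ℓ:ℝ))) := (Real.exp_nat_mul _ ℓ).symm
      _ = Real.exp 1 := by rw [mul_one_div, div_self (ne_of_gt hℓR)]
  calc ((Finset.univ.filter (fun h : ∀ j, X j → Fin (B j) =>
        ∃ z ∈ S, z ≠ x ∧ ∀ j, h j (z j) = h j (x j))).card : ℝ)
      ≤ ∑ z ∈ S.erase x, ((Ez z).card : ℝ) := h1
    _ = ∑ J : Finset (Fin ℓ), ∑ z ∈ (S.erase x).filter (fun z => Jf z = J),
          ((Ez z).card : ℝ) := h2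
    _ ≤ ∑ J : Finset (Fin ℓ), N * ε * (1/(ℓ:ℝ)) ^ (Jᶜ.card) :=
        Finset.sum_le_sum (fun J _ => h3 J)
    _ = N * ε * (1 + 1/(ℓ:ℝ)) ^ ℓ := h4
    _ ≤ N * ε * Real.exp 1 := by
        refine mul_le_mul_of_nonneg_left h5 (by positivity)
    _ = ε * Real.exp 1 * N := by ring
end

section
/- Let D be a decompressor mapping pairs of strings (or an ℓ-tuple oracle) to tuples, and let k = (k₁,...,k_ℓ) be an ℓ-tuple of integers. The set S of all ℓ-tuples x such that k satisfies the D-Slepian-Wolf constraints for x (i.e., C_D(x_J | x_{[ℓ]\J}) < Σ_{j∈J} k_j for every nonempty J ⊆ [ℓ]) has (2^{k₁},...,2^{k_ℓ})-small slices. -/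
/-- The set of `ℓ`-tuples `x` of binary strings such that the tuple `k` satisfies the
`D`-Slepian-Wolf constraints for `x`: for every nonempty `J ⊆ [ℓ]` there is a program `p`
of length less than `∑_{j ∈ J} k j` with `D p x_{[ℓ]\J} = x_J`. -/
def SWset (ℓ : ℕ)
    (D : List Bool → (Fin ℓ → Option (List Bool)) → Option (Fin ℓ → Option (List Bool)))
    (k : Fin ℓ → ℕ) : Set (Fin ℓ → List Bool) :=
  {x | ∀ J : Finset (Fin ℓ), J.Nonempty →
    ∃ p : List Bool, p.length < ∑ j ∈ J, k j ∧
      D p (fun j => if j ∈ J then none else some (x j)) =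
        some (fun j => if j ∈ J then some (x j) else none)}

/-!
The slice of the Slepian-Wolf set through `x` along `J` is sent injectively to the restrictions
`z_{Jᶜ}`, and by the constraint for `Jᶜ` each of these is the output of `D` on a program of length
less than `∑_{j ∈ Jᶜ} k j` with the common condition `x_J`. There are fewer than `2 ^ m` programs of
length less than `m`, hence fewer than `2 ^ m` such outputs. When `Jᶜ = ∅` the slice is at most `{x}`.
-/

lemma ncard_setOf_length_eq (α : Type*) [Fintype α] (n : ℕ) :
    {l : List α | l.length = n}.ncard = Fintype.card α ^ n := by
  rw [← Nat.card_coe_set_eq]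
  change Nat.card (List.Vector α n) = _
  rw [Nat.card_eq_fintype_card, card_vector]

lemma ncard_setOf_length_lt_two_pow (m : ℕ) : {l : List Bool | l.length < m}.ncard < 2 ^ m := by
  induction m with
  | zero => simp
  | succ m ih =>
    have hsplit : {l : List Bool | l.length < m + 1} =
        {l | l.length < m} ∪ {l | l.length = m} := by
      ext l; simp [le_iff_lt_or_eq]
    calc {l : List Bool | l.length < m + 1}.ncard
        ≤ {l : List Bool | l.length < m}.ncard + {l : List Bool | l.length = m}.ncard :=
          hsplit ▸ Set.ncard_union_le _ _
      _ < 2 ^ m + 2 ^ m := by rw [ncard_setOf_length_eq, Fintype.card_bool]; omega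
      _ = 2 ^ (m + 1) := by ring

section Decodable

variable {β γ : Type*} (D : List Bool → β → Option γ) (y : β) (m : ℕ)

lemma finite_setOf_decodable : {w | ∃ p : List Bool, p.length < m ∧ D p y = some w}.Finite :=
  (((List.finite_length_lt Bool m).image fun p => D p y).preimage
    (Option.some_injective γ).injOn).subset fun _ ⟨p, hp, hpw⟩ => ⟨p, hp, hpw⟩

lemma ncard_setOf_decodable_lt :
    {w | ∃ p : List Bool, p.length < m ∧ D p y = some w}.ncard < 2 ^ m := by
  have hsub : some '' {w | ∃ p : List Bool, p.length < m ∧ D p y = some w} ⊆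
      (fun p => D p y) '' {p | p.length < m} := by
    rintro _ ⟨w, ⟨p, hp, hpw⟩, rfl⟩
    exact ⟨p, hp, hpw⟩
  calc _ = (some '' {w | ∃ p : List Bool, p.length < m ∧ D p y = some w}).ncard :=
        (Set.ncard_image_of_injective _ (Option.some_injective γ)).symm
    _ ≤ ((fun p => D p y) '' {p : List Bool | p.length < m}).ncard :=
        Set.ncard_le_ncard hsub ((List.finite_length_lt Bool m).image _)
    _ ≤ {p : List Bool | p.length < m}.ncard := Set.ncard_image_le (List.finite_length_lt Bool m)
    _ < 2 ^ m := ncard_setOf_length_lt_two_pow m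

end Decodable

namespace SWset

variable {ℓ : ℕ}
    {D : List Bool → (Fin ℓ → Option (List Bool)) → Option (Fin ℓ → Option (List Bool))}
    {k : Fin ℓ → ℕ} {x : Fin ℓ → List Bool} {J : Finset (Fin ℓ)}

lemma slice_subset_singleton (hJ : Jᶜ = ∅) :
    {z ∈ SWset ℓ D k | ∀ j ∈ J, z j = x j} ⊆ {x} := fun z hz =>
  funext fun j => hz.2 j (by simpa using Finset.eq_empty_iff_forall_notMem.mp hJ j)

lemma mapsTo_slice_setOf_decodable (hJ : Jᶜ.Nonempty) :
    Set.MapsTo (fun z j => if j ∈ Jᶜ then some (z j) else none)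
      {z ∈ SWset ℓ D k | ∀ j ∈ J, z j = x j}
      {w | ∃ p : List Bool, p.length < ∑ j ∈ Jᶜ, k j ∧
        D p (fun j => if j ∈ Jᶜ then none else some (x j)) = some w} := by
  rintro z ⟨hz, hzx⟩
  obtain ⟨p, hp, hpz⟩ := hz Jᶜ hJ
  refine ⟨p, hp, ?_⟩
  convert hpz using 3 with j
  split_ifs with hj
  · rfl
  · rw [hzx j (by simpa using hj)]

lemma injOn_slice : Set.InjOn (fun z j => if j ∈ Jᶜ then some (z j) else none)
      {z ∈ SWset ℓ D k | ∀ j ∈ J, z j = x j} := by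
  intro z ⟨_, hzx⟩ w ⟨_, hwx⟩ hzw
  funext j
  by_cases hj : j ∈ J
  · rw [hzx j hj, hwx j hj]
  · simpa [hj] using congrFun hzw j

end SWset

theorem stmt_11_general (ℓ : ℕ)
    (D : List Bool → (Fin ℓ → Option (List Bool)) → Option (Fin ℓ → Option (List Bool)))
    (k : Fin ℓ → ℕ) (x : Fin ℓ → List Bool)
    (J : Finset (Fin ℓ)) :
    ({z ∈ SWset ℓ D k | ∀ j ∈ J, z j = x j}).Finite ∧
      Nat.card {z ∈ SWset ℓ D k | ∀ j ∈ J, z j = x j} ≤ ∏ j ∈ Jᶜ, 2 ^ k j := by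
  rw [Nat.card_coe_set_eq]
  rcases Jᶜ.eq_empty_or_nonempty with hJ | hJ
  · have hsub := SWset.slice_subset_singleton (D := D) (k := k) (x := x) hJ
    refine ⟨(Set.finite_singleton x).subset hsub, ?_⟩
    calc _ ≤ ({x} : Set (Fin ℓ → List Bool)).ncard := Set.ncard_le_ncard hsub
      _ = 1 := Set.ncard_singleton x
      _ ≤ ∏ j ∈ Jᶜ, 2 ^ k j := Finset.one_le_prod' fun j _ => Nat.one_le_two_pow
  · have hmaps := SWset.mapsTo_slice_setOf_decodable (D := D) (k := k) (x := x) hJ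
    refine ⟨(finite_setOf_decodable ..).of_injOn hmaps SWset.injOn_slice, ?_⟩
    calc _ ≤ _ := Set.ncard_le_ncard_of_injOn _ hmaps SWset.injOn_slice (finite_setOf_decodable ..)
      _ ≤ 2 ^ ∑ j ∈ Jᶜ, k j := (ncard_setOf_decodable_lt ..).le
      _ = ∏ j ∈ Jᶜ, 2 ^ k j := (Finset.prod_pow_eq_pow_sum Jᶜ k 2).symm

theorem stmt_11 (ℓ : ℕ)
    (D : List Bool → (Fin ℓ → Option (List Bool)) → Option (Fin ℓ → Option (List Bool)))
    (k : Fin ℓ → ℕ) (x : Fin ℓ → List Bool) (hx : x ∈ SWset ℓ D k)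
    (J : Finset (Fin ℓ)) :
    ({z ∈ SWset ℓ D k | ∀ j ∈ J, z j = x j}).Finite ∧
      Nat.card {z ∈ SWset ℓ D k | ∀ j ∈ J, z j = x j} ≤ ∏ j ∈ Jᶜ, 2 ^ k j :=
  stmt_11_general ℓ D k x J
end

section
/- Let μ be a probability measure on a finite set 𝒴 supported on at most 2^d elements, and let b be a nonnegative integer. Then there exists a probability measure ν on 𝒴 all of whose values are multiples of 1/2^{d+b} such that ν(y) ≤ (1 + 3·2^{-b})·μ(y) for all y ∈ 𝒴. -/
lemma aux_reduce {Y : Type*} [Fintype Y] :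
    ∀ (s : ℕ) (f : Y → ℕ), ∑ y, f y = s → ∀ n ≤ s,
      ∃ g : Y → ℕ, (∀ y, g y ≤ f y) ∧ ∑ y, g y = n := by
  classical
  intro s
  induction s with
  | zero =>
    intro f hf n hn
    exact ⟨f, fun y => le_rfl, by omega⟩
  | succ s ih =>
    intro f hf n hn
    rcases eq_or_lt_of_le hn with h | h
    · exact ⟨f, fun y => le_rfl, by omega⟩
    · have hpos : ∑ y, f y ≠ 0 := by omega
      obtain ⟨y0, -, hy0⟩ := Finset.exists_ne_zero_of_sum_ne_zero hpos
      set f' : Y → ℕ := Function.update f y0 (f y0 - 1) with hf'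
      have hsum' : ∑ y, f' y = s := by
        have h1 : ∑ y, f' y = f y0 - 1 + ∑ y ∈ Finset.univ.erase y0, f y := by
          rw [hf', Finset.sum_update_of_mem (Finset.mem_univ y0)]
          congr 1
          apply Finset.sum_congr
          · rw [Finset.sdiff_singleton_eq_erase]
          · intro x hx
            rfl
        have h2 : ∑ y, f y = f y0 + ∑ y ∈ Finset.univ.erase y0, f y :=
          (Finset.add_sum_erase _ f (Finset.mem_univ y0)).symm
        omega
      obtain ⟨g, hg1, hg2⟩ := ih f' hsum' n (by omega)
      refine ⟨g, fun y => ?_, hg2⟩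
      refine (hg1 y).trans ?_
      by_cases hy : y = y0
      · subst hy; rw [hf', Function.update_self]; omega
      · rw [hf', Function.update_of_ne hy]

open scoped Classical in
theorem stmt_12 {Y : Type*} [Fintype Y]
    (d b : ℕ) (μ : Y → ℝ) (hμ : ∀ y, 0 ≤ μ y) (hsum : ∑ y, μ y = 1)
    (hsupp : (Finset.univ.filter (fun y => μ y ≠ 0)).card ≤ 2 ^ d) :
    ∃ ν : Y → ℝ, (∀ y, 0 ≤ ν y) ∧ ∑ y, ν y = 1 ∧
      (∀ y, ∃ m : ℕ, ν y = (m : ℝ) / 2 ^ (d + b)) ∧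
      ∀ y, ν y ≤ (1 + 3 / 2 ^ b) * μ y := by
  set c : ℝ := 1 + 2 / 2 ^ b with hc
  have hb : (0:ℝ) < 2 ^ b := by positivity
  have hN : (0:ℝ) < 2 ^ (d + b) := by positivity
  have hc0 : (0:ℝ) ≤ c := by rw [hc]; positivity
  set m : Y → ℕ := fun y => ⌊c * 2 ^ (d + b) * μ y⌋₊ with hm
  have hmle : ∀ y, (m y : ℝ) ≤ c * 2 ^ (d + b) * μ y := by
    intro y
    exact Nat.floor_le (by have := hμ y; positivity)
  have hmgt : ∀ y, c * 2 ^ (d + b) * μ y - 1 < (m y : ℝ) := by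
    intro y
    have := Nat.lt_floor_add_one (c * 2 ^ (d + b) * μ y)
    push_cast
    linarith
  set S := Finset.univ.filter (fun y => μ y ≠ 0) with hS
  have hSsum : ∑ y ∈ S, μ y = 1 := by
    rw [hS, Finset.sum_filter_ne_zero, hsum]
  -- key: 2^(d+b) ≤ ∑ m y
  have hkey : (2:ℕ) ^ (d + b) ≤ ∑ y, m y := by
    have h1 : (2:ℝ) ^ (d + b) ≤ ∑ y, (m y : ℝ) := by
      have h2 : ∑ y ∈ S, (m y : ℝ) ≤ ∑ y, (m y : ℝ) := by
        apply Finset.sum_le_sum_of_subset_of_nonneg (Finset.filter_subset _ _)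
        intro y _ _; positivity
      have h3 : ∑ y ∈ S, (c * 2 ^ (d + b) * μ y - 1) ≤ ∑ y ∈ S, (m y : ℝ) :=
        Finset.sum_le_sum (fun y _ => (hmgt y).le)
      have h4 : ∑ y ∈ S, (c * 2 ^ (d + b) * μ y - 1)
          = c * 2 ^ (d + b) - S.card := by
        rw [Finset.sum_sub_distrib, ← Finset.mul_sum, hSsum, mul_one]
        simp
      have h5 : (S.card : ℝ) ≤ 2 ^ d := by
        exact_mod_cast hsupp
      have h6 : c * 2 ^ (d + b) = 2 ^ (d + b) + 2 * 2 ^ d := by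
        rw [hc, pow_add]
        field_simp
      have h7 : (2:ℝ) ^ (d + b) ≤ c * 2 ^ (d + b) - S.card := by
        rw [h6]
        have : (0:ℝ) ≤ 2 ^ d := by positivity
        linarith
      linarith
    exact_mod_cast h1
  obtain ⟨g, hg1, hg2⟩ := aux_reduce (∑ y, m y) m rfl (2 ^ (d + b)) hkey
  refine ⟨fun y => (g y : ℝ) / 2 ^ (d + b), ?_, ?_, ?_, ?_⟩
  · intro y; positivity
  · rw [← Finset.sum_div]
    rw [div_eq_one_iff_eq (ne_of_gt hN)]
    exact_mod_cast hg2
  · intro y; exact ⟨g y, rfl⟩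
  · intro y
    have h1 : (g y : ℝ) ≤ (m y : ℝ) := by exact_mod_cast hg1 y
    have h2 : (g y : ℝ) / 2 ^ (d + b) ≤ c * μ y := by
      rw [div_le_iff₀ hN]
      calc (g y : ℝ) ≤ (m y : ℝ) := h1
        _ ≤ c * 2 ^ (d + b) * μ y := hmle y
        _ = c * μ y * 2 ^ (d + b) := by ring
    refine h2.trans ?_
    have : c ≤ 1 + 3 / 2 ^ b := by
      rw [hc]
      have : (2:ℝ) / 2 ^ b ≤ 3 / 2 ^ b := by
        gcongr
        norm_num
      linarith
    nlinarith [hμ y, hc0]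
end

section
/- For all ε ∈ (0,1], positive integers n and K_max with εK_max > 1 and 4K_max ≤ 2^n, there exists a function f : [2^n] × [D] → [4K_max] with D = ⌈3n/ε⌉ such that for every set X ⊆ [2^n] with |X| ≤ K_max and every set Y ⊆ [4K_max] with |Y| = ⌈ε|X|⌉, the fraction of pairs (x,i) ∈ X × [D] with f(x,i) ∈ Y is at most ε. Consequently x ↦ f(x, U_{[D]}) is a (K_max, ε)-conductor using at most log(4n/ε) random bits. -/
/-!
Think of `f` as a uniformly random function. For fixed `X` of size `k` and `Y` of size
`m = ⌈εk⌉`, the number `Z` of pairs of `X × [D]` sent into `Y` is binomial with mean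
`μ = kDm/M`, where `M = 4K`. The moment bound `E θ^Z ≤ exp((θ - 1)μ)` at `θ = 4εK/m` makes
`Z > εkD` less likely than `2^(-(k+1)) / ((2^n)^k M^m)`, and there are at most `(2^n)^k M^m`
such pairs `(X, Y)`; summing over `k`, some `f` has no bad pair at all. The estimate needs `θ`
well above `e`, which holds once `εK ≥ 21`. Indeed if `⌈εK⌉ > 3n`, then `4(3n + 1) ≤ 4K ≤ 2^n`
forces `n ≥ 7` and `εK > 3n ≥ 21`; otherwise `⌈εK⌉ ≤ 3n ≤ εD` and the deterministic map
`(x, i) ↦ i mod M` sends at most `m (D/M + 1) ≤ εD` seeds of each `x` into an `m`-set.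

For the excess: if more than `m = ⌈ε|S|⌉` outputs each had mass above `1/|S|`, then `m` of them
would carry more than `m/|S| ≥ ε`; so the heavy outputs fit in one `m`-set, whose mass `≤ ε`
bounds the excess.
-/

open Finset Real

theorem sum_max_zero_sub_le_of_forall_card_eq {β : Type*} [Fintype β]
    (c : β → ℝ) (hc : ∀ y, 0 ≤ c y) {t B : ℝ} (ht : 0 ≤ t) {m : ℕ} (hm : 0 < m)
    (hmβ : m ≤ Fintype.card β) (hB : B ≤ m * t)
    (hY : ∀ Y : Finset β, #Y = m → ∑ y ∈ Y, c y ≤ B) :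
    ∑ y, max 0 (c y - t) ≤ B := by
  set P : Finset β := {y | t < c y}
  have hsum : ∑ y, max 0 (c y - t) ≤ ∑ y ∈ P, c y := by
    rw [sum_filter]
    refine sum_le_sum fun y _ => ?_
    split_ifs with h
    · exact max_le (hc y) (by linarith)
    · exact max_le le_rfl (by linarith [not_lt.mp h])
  rcases le_or_gt #P m with hP | hP
  · obtain ⟨Y, hPY, -, hYm⟩ := exists_subsuperset_card_eq P.subset_univ hP (by simpa using hmβ)
    calc _ ≤ ∑ y ∈ P, c y := hsum
      _ ≤ ∑ y ∈ Y, c y := sum_le_sum_of_subset_of_nonneg hPY fun y _ _ => hc y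
      _ ≤ B := hY Y hYm
  · obtain ⟨Y, hYP, hYm⟩ := exists_subset_card_eq hP.le
    have hYne : Y.Nonempty := card_pos.mp (hYm ▸ hm)
    have : B < ∑ y ∈ Y, c y := calc
      B ≤ ∑ _y ∈ Y, t := by simpa [hYm] using hB
      _ < ∑ y ∈ Y, c y := sum_lt_sum_of_nonempty hYne fun y hy => by simpa [P] using hYP hy
    exact absurd (hY Y hYm) this.not_ge

theorem sum_max_card_filter_div_sub_le {γ β : Type*} [Fintype β] [DecidableEq β] (T : Finset γ)
    (g : γ → β) {ε L : ℝ} (hε : 0 < ε) (hL : 0 ≤ L) {k : ℕ} (hk : 0 < k)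
    (hβ : ⌈ε * k⌉₊ ≤ Fintype.card β)
    (h : ∀ Y : Finset β, #Y = ⌈ε * k⌉₊ → (#{p ∈ T | g p ∈ Y} : ℝ) ≤ ε * L) :
    ∑ y, max 0 ((#{p ∈ T | g p = y} : ℝ) / L - 1 / k) ≤ ε := by
  have hk' : (0 : ℝ) < k := by exact_mod_cast hk
  refine sum_max_zero_sub_le_of_forall_card_eq _ (fun y => by positivity) (by positivity)
    (Nat.ceil_pos.mpr (by positivity)) hβ ?_ fun Y hY => ?_
  · rw [mul_one_div, le_div_iff₀ hk']; exact Nat.le_ceil _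
  · rw [← sum_div]
    refine div_le_of_le_mul₀ hL hε.le ?_
    calc ∑ y ∈ Y, (#{p ∈ T | g p = y} : ℝ) = #{p ∈ T | g p ∈ Y} := by
          rw [card_eq_sum_card_fiberwise (f := g) (s := {p ∈ T | g p ∈ Y}) (t := Y)
            fun p hp => (mem_filter.mp hp).2, Nat.cast_sum]
          refine sum_congr rfl fun y hy => ?_
          rw [filter_filter, filter_congr fun p _ => and_iff_right_of_imp fun h => h ▸ hy]
      _ ≤ ε * L := h Y hY

theorem exists_forall_not_of_sum_card_filter_lt {ι γ : Type*} [Fintype γ] (I : Finset ι)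
    (P : ι → γ → Prop) [∀ i, DecidablePred (P i)]
    (h : ∑ i ∈ I, #{g | P i g} < Fintype.card γ) : ∃ g, ∀ i ∈ I, ¬ P i g := by
  classical
  by_contra! hP
  have : (univ : Finset γ) ⊆ I.biUnion fun i => {g | P i g} := fun g _ => by simpa using hP g
  exact (h.trans_le (card_le_card this |>.trans card_biUnion_le)).false

theorem sum_ite_mem_le_card_mul_exp {β : Type*} [Fintype β] [Nonempty β] [DecidableEq β]
    (Y : Finset β) (θ : ℝ) :
    ∑ b, (if b ∈ Y then θ else 1) ≤ Fintype.card β * exp ((θ - 1) * (#Y / Fintype.card β)) :=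
  calc ∑ b, (if b ∈ Y then θ else 1)
      = Fintype.card β * ((θ - 1) * (#Y / Fintype.card β) + 1) := by
        rw [sum_ite]
        simp [filter_not, card_univ_sdiff, Nat.cast_sub (card_le_univ Y)]
        field_simp
        ring
    _ ≤ _ := by gcongr; exact add_one_le_exp _

theorem card_filter_lt_card_filter_mem_mul_rpow_le {α β : Type*} [Fintype α] [DecidableEq α]
    [Fintype β] [Nonempty β] [DecidableEq β] (T : Finset α) (Y : Finset β) {θ : ℝ} (hθ : 1 ≤ θ)
    (ν : ℝ) :
    (#{g : α → β | ν < #{a ∈ T | g a ∈ Y}} : ℝ) * θ ^ ν ≤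
      (Fintype.card β : ℝ) ^ Fintype.card α * exp ((θ - 1) * (#Y / Fintype.card β) * #T) := by
  set E := exp ((θ - 1) * (#Y / Fintype.card β))
  have hpow (g : α → β) :
      θ ^ #{a ∈ T | g a ∈ Y} = ∏ a, if a ∈ T then (if g a ∈ Y then θ else 1) else 1 := by
    rw [Fintype.prod_ite_mem, ← prod_filter, prod_const]
  have hmgf : ∑ g : α → β, θ ^ #{a ∈ T | g a ∈ Y} ≤
      (Fintype.card β : ℝ) ^ Fintype.card α * E ^ #T := by
    calc ∑ g : α → β, θ ^ #{a ∈ T | g a ∈ Y}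
        = ∏ a, ∑ b, (if a ∈ T then (if b ∈ Y then θ else 1) else 1) := by
          simp_rw [hpow]
          exact (Fintype.prod_sum (κ := fun _ => β)
            fun a b => if a ∈ T then (if b ∈ Y then θ else 1) else 1).symm
      _ ≤ ∏ a, (Fintype.card β * if a ∈ T then E else 1) := by
          refine prod_le_prod (fun a _ => sum_nonneg fun b _ => ?_) fun a _ => ?_
          · split_ifs <;> linarith
          · split_ifs
            · exact sum_ite_mem_le_card_mul_exp Y θ
            · simp
      _ = _ := by rw [prod_mul_distrib, Fintype.prod_ite_mem, prod_const, prod_const, card_univ]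
  calc (#{g : α → β | ν < #{a ∈ T | g a ∈ Y}} : ℝ) * θ ^ ν
      ≤ ∑ g ∈ {g : α → β | ν < #{a ∈ T | g a ∈ Y}}, θ ^ #{a ∈ T | g a ∈ Y} := by
        rw [← nsmul_eq_mul]
        refine card_nsmul_le_sum _ _ _ fun g hg => ?_
        rw [← rpow_natCast]
        exact rpow_le_rpow_of_exponent_le hθ (mem_filter.mp hg).2.le
    _ ≤ ∑ g : α → β, θ ^ #{a ∈ T | g a ∈ Y} :=
        sum_le_sum_of_subset_of_nonneg (subset_univ _) fun _ _ _ => by positivity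
    _ ≤ _ := by rw [mul_comm _ (#T : ℝ), exp_nat_mul]; exact hmgf

theorem pow_mul_pow_mul_exp_le {ε : ℝ} (hε : 0 < ε) {n K k m D : ℕ} (hn : 7 ≤ n)
    (hK : 4 * K ≤ 2 ^ n) (hεK : 21 ≤ ε * K) (hD : 3 * n ≤ ε * D) (hm : 1 ≤ m) (hmk : m ≤ k)
    (hmK : m ≤ ε * K + 1) :
    (2 ^ n : ℝ) ^ k * (4 * K : ℝ) ^ m * exp ((4 * ε * K / m - 1) * (m / (4 * K)) * (k * D)) ≤
      (1 / 2) ^ (k + 1) * (4 * ε * K / m) ^ (ε * (k * D)) := by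
  have hm0 : (0 : ℝ) < m := by exact_mod_cast hm
  have hK0 : (0 : ℝ) < K := by nlinarith
  set s : ℝ := m / (ε * K) with hs_def
  have hs0 : 0 < s := by positivity
  have hs : s ≤ 22 / 21 := by rw [div_le_iff₀ (by positivity)]; linarith
  have hθ : 4 * ε * K / m = 4 / s := by rw [hs_def]; field_simp
  have hexp : (4 / s - 1) * (m / (4 * K)) = ε - ε * s / 4 := by
    rw [← hθ, hs_def]; field_simp
  have hlog4K : log (4 * K) ≤ n * log 2 := by
    rw [← log_pow]; exact log_le_log (by positivity) (by exact_mod_cast hK)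
  have hlogθ : 2 * log 2 - (s - 1) ≤ log (4 / s) := by
    rw [log_div (by norm_num) hs0.ne', show (4 : ℝ) = 2 ^ 2 by norm_num, log_pow]
    push_cast
    linarith [log_le_sub_one_of_pos hs0]
  rw [hθ, hexp, ← log_le_log_iff (by positivity) (by positivity), log_mul (by positivity)
    (by positivity), log_mul (by positivity) (by positivity), log_mul (by positivity)
    (by positivity), log_exp, log_rpow (by positivity), log_pow, log_pow, log_pow, log_pow,
    one_div, log_inv]
  push_cast
  have hk : (1 : ℝ) ≤ k := by exact_mod_cast hm.trans hmk
  have hmk' : (m : ℝ) ≤ k := by exact_mod_cast hmk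
  have hn' : (7 : ℝ) ≤ n := by exact_mod_cast hn
  have hX : 3 * n * k ≤ ε * (k * D) := by nlinarith
  -- the union bound costs `≤ (16/7) log 2 < 1.6` per unit of `nk`, Chernoff gains
  -- `2 log 2 - 3s/4 > 0.6` per unit of `εkD ≥ 3nk`
  have hexponent : k * n * log 2 + m * (n * log 2) + (k + 1) * log 2 ≤
      ε * (k * D) * (2 * log 2 - 3 * s / 4) := by
    have ha := log_two_gt_d9
    have hna : 0 ≤ n * log 2 := by positivity
    have hka : 0 ≤ k * log 2 := by positivity
    have hnk : (0 : ℝ) ≤ n * k := by positivity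
    calc k * n * log 2 + m * (n * log 2) + (k + 1) * log 2 ≤ 16 / 7 * (n * k) * log 2 := by
          nlinarith [mul_le_mul_of_nonneg_right hmk' hna, mul_le_mul_of_nonneg_left hn' hka]
      _ ≤ 3 * n * k * (2 * log 2 - 3 * s / 4) := by nlinarith
      _ ≤ ε * (k * D) * (2 * log 2 - 3 * s / 4) := mul_le_mul_of_nonneg_right hX (by linarith)
  nlinarith [mul_le_mul_of_nonneg_left hlog4K hm0.le,
    mul_le_mul_of_nonneg_left hlogθ (by positivity : (0 : ℝ) ≤ ε * (k * D))]

def HitsSmallSetsRarely (ε : ℝ) (K : ℕ) {N D M : ℕ} (f : Fin N → Fin D → Fin M) : Prop :=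
  ∀ X : Finset (Fin N), #X ≤ K → ∀ Y : Finset (Fin M), #Y = ⌈ε * #X⌉₊ →
    (#((X ×ˢ (univ : Finset (Fin D))).filter fun p => f p.1 p.2 ∈ Y) : ℝ) ≤ ε * (#X * D)

theorem card_filter_val_mod_eq_le (D M y : ℕ) : #{i : Fin D | i.val % M = y} ≤ D / M + 1 := by
  calc #{i : Fin D | i.val % M = y} ≤ #(range (D / M + 1)) := by
        refine card_le_card_of_injOn (fun i => i.val / M) (fun i _ => ?_) fun i hi j hj hij => ?_
        · simpa [Nat.lt_succ_iff] using Nat.div_le_div_right i.isLt.le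
        · simp only [coe_filter, mem_univ, true_and, Set.mem_ofPred_eq] at hi hj
          rw [Fin.ext_iff, ← Nat.div_add_mod i.val M, ← Nat.div_add_mod j.val M, hi, hj]
          simp_all
    _ = D / M + 1 := card_range _

theorem hitsSmallSetsRarely_mod {ε : ℝ} (hε : 0 ≤ ε) {K N D M : ℕ} (hM : 0 < M)
    (h : (⌈ε * K⌉₊ : ℝ) * (D / M + 1 : ℕ) ≤ ε * D) :
    HitsSmallSetsRarely ε K fun (_ : Fin N) (i : Fin D) => (⟨i % M, Nat.mod_lt _ hM⟩ : Fin M) := by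
  intro X hXK Y hY
  set S : Finset (Fin D) := {i | (⟨i % M, Nat.mod_lt _ hM⟩ : Fin M) ∈ Y}
  have hprod : ((X ×ˢ (univ : Finset (Fin D))).filter
      fun p => (⟨p.2 % M, Nat.mod_lt _ hM⟩ : Fin M) ∈ Y) = X ×ˢ S := by
    ext p; simp [S]
  have hS : #S ≤ (D / M + 1) * ⌈ε * K⌉₊ := by
    calc #S ≤ (D / M + 1) * #Y :=
          card_le_mul_card_image_of_maps_to (fun i hi => (mem_filter.mp hi).2) _ fun y _ =>
            le_trans (card_le_card fun i hi => by
              simp only [mem_filter, mem_univ, true_and] at hi ⊢; exact congrArg Fin.val hi.2)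
            (card_filter_val_mod_eq_le D M y)
      _ ≤ (D / M + 1) * ⌈ε * K⌉₊ := by rw [hY]; gcongr
  rw [hprod, card_product, Nat.cast_mul]
  calc (#X : ℝ) * #S ≤ #X * (⌈ε * K⌉₊ * (D / M + 1 : ℕ)) := by
        gcongr; rw [mul_comm]; exact_mod_cast hS
    _ ≤ #X * (ε * D) := by gcongr
    _ = ε * (#X * D) := by ring

theorem ceil_mul_div_add_one_le {ε : ℝ} {K D : ℕ} (hεK : 1 ≤ ε * K)
    (h : (⌈ε * K⌉₊ : ℝ) ≤ ε * D) : (⌈ε * K⌉₊ : ℝ) * (D / (4 * K) + 1 : ℕ) ≤ ε * D := by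
  rcases lt_or_ge D (4 * K) with hD | hD
  · simpa [Nat.div_eq_of_lt hD] using h
  have hK : (0 : ℝ) < K :=
    Nat.cast_pos.mpr <| Nat.pos_of_ne_zero fun hK => by simp [hK] at hεK; linarith
  have hceil : (⌈ε * K⌉₊ : ℝ) ≤ 2 * (ε * K) := by
    linarith [Nat.ceil_lt_add_one (by linarith : 0 ≤ ε * K)]
  have hdiv : ((D / (4 * K) + 1 : ℕ) : ℝ) ≤ 2 * (D / (4 * K)) := by
    have h1 : ((D / (4 * K) : ℕ) : ℝ) ≤ D / (4 * K) := by exact_mod_cast Nat.cast_div_le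
    have h2 : (1 : ℝ) ≤ D / (4 * K) := by
      rw [one_le_div (by positivity)]; exact_mod_cast hD
    push_cast; linarith
  calc (⌈ε * K⌉₊ : ℝ) * (D / (4 * K) + 1 : ℕ) ≤ 2 * (ε * K) * (2 * (D / (4 * K))) := by
        gcongr
    _ = ε * D := by field_simp; ring

theorem card_filter_lt_le_half_pow_div {ε : ℝ} (hε : 0 < ε) (hε1 : ε ≤ 1) {n K D : ℕ}
    (hn : 7 ≤ n) (hK : 4 * K ≤ 2 ^ n) (hεK : 21 ≤ ε * K) (hD : 3 * n ≤ ε * D)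
    (X : Finset (Fin (2 ^ n))) (hX : X.Nonempty) (hXK : #X ≤ K) (Y : Finset (Fin (4 * K)))
    (hY : #Y = ⌈ε * #X⌉₊) :
    (#{g : Fin (2 ^ n) × Fin D → Fin (4 * K) | ε * (#X * D) < #{p ∈ X ×ˢ univ | g p ∈ Y}} : ℝ) ≤
      (1 / 2) ^ (#X + 1) * (4 * K) ^ (2 ^ n * D) / ((2 ^ n) ^ #X * (4 * K) ^ #Y) := by
  have hk : (0 : ℝ) < #X := by exact_mod_cast hX.card_pos
  have hm : 1 ≤ #Y := hY ▸ Nat.one_le_ceil_iff.mpr (by positivity)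
  have hmk : #Y ≤ #X := hY ▸ Nat.ceil_le.mpr (by nlinarith)
  have hmK : (#Y : ℝ) ≤ ε * K + 1 := by
    have : ε * #X ≤ ε * K := by gcongr
    linarith [hY ▸ Nat.ceil_lt_add_one (by positivity : 0 ≤ ε * #X)]
  have hK0 : 0 < K := hX.card_pos.trans_le hXK
  have : NeZero (4 * K) := ⟨by omega⟩
  have hK0' : (0 : ℝ) < K := by exact_mod_cast hK0
  set θ : ℝ := 4 * ε * K / #Y
  have hθ : 1 ≤ θ := by
    rw [one_le_div (by exact_mod_cast hm)]; linarith
  have hchernoff := card_filter_lt_card_filter_mem_mul_rpow_le (X ×ˢ (univ : Finset (Fin D))) Y hθ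
    (ε * (#X * D))
  simp only [Fintype.card_prod, Fintype.card_fin, card_product, card_univ] at hchernoff
  push_cast at hchernoff
  have hnum := pow_mul_pow_mul_exp_le hε hn hK hεK hD hm hmk hmK
  rw [le_div_iff₀ (by positivity)]
  refine le_of_mul_le_mul_right ?_ (by positivity : 0 < θ ^ (ε * (#X * D)))
  calc _ = _ * θ ^ (ε * (#X * D)) * ((2 ^ n) ^ #X * (4 * K) ^ #Y) := by ring
    _ ≤ (4 * K) ^ (2 ^ n * D) * exp ((θ - 1) * (#Y / (4 * K)) * (#X * D)) *
          ((2 ^ n) ^ #X * (4 * K) ^ #Y) := by gcongr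
    _ = (4 * K) ^ (2 ^ n * D) * ((2 ^ n) ^ #X * (4 * K) ^ #Y *
          exp ((θ - 1) * (#Y / (4 * K)) * (#X * D))) := by ring
    _ ≤ (4 * K) ^ (2 ^ n * D) * ((1 / 2) ^ (#X + 1) * θ ^ (ε * (#X * D))) := by gcongr
    _ = _ := by ring

theorem sum_card_filter_lt_le_half_pow {ε : ℝ} (hε : 0 < ε) (hε1 : ε ≤ 1) {n K D : ℕ}
    (hn : 7 ≤ n) (hK : 4 * K ≤ 2 ^ n) (hεK : 21 ≤ ε * K) (hD : 3 * n ≤ ε * D) {k : ℕ}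
    (hk : 1 ≤ k) (hkK : k ≤ K) :
    ∑ q ∈ powersetCard k (univ : Finset (Fin (2 ^ n))) ×ˢ
        powersetCard ⌈ε * k⌉₊ (univ : Finset (Fin (4 * K))),
      (#{g : Fin (2 ^ n) × Fin D → Fin (4 * K) | ε * (k * D) < #{p ∈ q.1 ×ˢ univ | g p ∈ q.2}} : ℝ)
      ≤ (1 / 2) ^ (k + 1) * (4 * K) ^ (2 ^ n * D) := by
  have hK0 : (0 : ℝ) < K := by by_contra! h; nlinarith
  set A : ℝ := (2 ^ n) ^ k * (4 * K) ^ ⌈ε * k⌉₊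
  have hA : A ≠ 0 := by positivity
  calc _ ≤ ∑ _q ∈ powersetCard k (univ : Finset (Fin (2 ^ n))) ×ˢ
          powersetCard ⌈ε * k⌉₊ (univ : Finset (Fin (4 * K))),
          (1 / 2) ^ (k + 1) * (4 * K : ℝ) ^ (2 ^ n * D) / A := by
        refine sum_le_sum fun ⟨X, Y⟩ hXY => ?_
        simp only [mem_product, mem_powersetCard, subset_univ, true_and] at hXY
        obtain ⟨rfl, hY⟩ := hXY
        simpa [A, hY] using
          card_filter_lt_le_half_pow_div hε hε1 hn hK hεK hD X (card_pos.mp hk) hkK Y hY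
    _ ≤ A * ((1 / 2) ^ (k + 1) * (4 * K : ℝ) ^ (2 ^ n * D) / A) := by
        rw [sum_const, nsmul_eq_mul]
        gcongr
        simp only [A, card_product, card_powersetCard, card_univ, Fintype.card_fin]
        exact_mod_cast Nat.mul_le_mul (Nat.choose_le_pow _ _) (Nat.choose_le_pow _ _)
    _ = _ := mul_div_cancel₀ _ hA

theorem exists_hitsSmallSetsRarely_of_21_le {ε : ℝ} (hε : 0 < ε) (hε1 : ε ≤ 1) {n K D : ℕ}
    (hn : 7 ≤ n) (hK : 4 * K ≤ 2 ^ n) (hεK : 21 ≤ ε * K) (hD : 3 * n ≤ ε * D) :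
    ∃ f : Fin (2 ^ n) → Fin D → Fin (4 * K), HitsSmallSetsRarely ε K f := by
  set I := (Icc 1 K).sigma fun k =>
    powersetCard k (univ : Finset (Fin (2 ^ n))) ×ˢ
      powersetCard ⌈ε * k⌉₊ (univ : Finset (Fin (4 * K)))
  set P : (Σ _ : ℕ, Finset (Fin (2 ^ n)) × Finset (Fin (4 * K))) →
      (Fin (2 ^ n) × Fin D → Fin (4 * K)) → Prop :=
    fun q g => ε * (q.1 * D) < #{p ∈ q.2.1 ×ˢ univ | g p ∈ q.2.2}
  have hsum : ∑ q ∈ I, (#{g | P q g} : ℝ) < Fintype.card (Fin (2 ^ n) × Fin D → Fin (4 * K)) := by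
    have hgeom : ∑ k ∈ range (K + 1), (1 / 2 : ℝ) ^ k < 2 := by
      rw [geom_sum_eq (by norm_num), div_lt_iff_of_neg (by norm_num)]
      linarith [pow_pos (by norm_num : (0 : ℝ) < 1 / 2) (K + 1)]
    calc ∑ q ∈ I, (#{g | P q g} : ℝ)
        ≤ ∑ k ∈ Icc 1 K, (1 / 2) ^ (k + 1) * (4 * K : ℝ) ^ (2 ^ n * D) := by
          rw [sum_sigma]
          exact sum_le_sum fun k hk => sum_card_filter_lt_le_half_pow hε hε1 hn hK hεK hD
            (mem_Icc.mp hk).1 (mem_Icc.mp hk).2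
      _ ≤ ∑ k ∈ range (K + 1), (1 / 2) ^ (k + 1) * (4 * K : ℝ) ^ (2 ^ n * D) :=
          sum_le_sum_of_subset_of_nonneg (fun k hk => by simp at hk ⊢; omega)
            fun _ _ _ => by positivity
      _ = 1 / 2 * (∑ k ∈ range (K + 1), (1 / 2) ^ k) * (4 * K : ℝ) ^ (2 ^ n * D) := by
          rw [mul_sum, sum_mul]; congr 1; ext k; ring
      _ < 1 / 2 * 2 * (4 * K : ℝ) ^ (2 ^ n * D) := by
          have hK0 : (0 : ℝ) < K := by by_contra! h; nlinarith
          gcongr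
      _ = _ := by simp
  obtain ⟨g, hg⟩ := exists_forall_not_of_sum_card_filter_lt I P (by exact_mod_cast hsum)
  refine ⟨fun x i => g (x, i), fun X hXK Y hY => ?_⟩
  rcases X.eq_empty_or_nonempty with rfl | hX
  · simp
  · exact not_lt.mp <| hg ⟨#X, X, Y⟩ <| by
      simpa [I, hXK, hY, Nat.one_le_iff_ne_zero] using hX.ne_empty

theorem exists_hitsSmallSetsRarely {ε : ℝ} (hε : 0 < ε) (hε1 : ε ≤ 1) {n K D : ℕ}
    (hεK : 1 < ε * K) (hK : 4 * K ≤ 2 ^ n) (hD : 3 * n ≤ ε * D) :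
    ∃ f : Fin (2 ^ n) → Fin D → Fin (4 * K), HitsSmallSetsRarely ε K f := by
  by_cases hsmall : ⌈ε * K⌉₊ ≤ 3 * n
  · have hK0 : 0 < 4 * K := by
      have : K ≠ 0 := by rintro rfl; norm_num at hεK
      omega
    exact ⟨_, hitsSmallSetsRarely_mod hε.le hK0 <| ceil_mul_div_add_one_le hεK.le <|
      le_trans (by exact_mod_cast hsmall) hD⟩
  · have hlt : (3 * n : ℝ) < ε * K := by exact_mod_cast Nat.lt_ceil.mp (not_le.mp hsmall)
    have hKn : 3 * n < K := by
      exact_mod_cast (not_le.mp hsmall).trans_le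
        (Nat.ceil_le.mpr (mul_le_of_le_one_left K.cast_nonneg hε1))
    have hn : 7 ≤ n := by
      by_contra! hn
      interval_cases n <;> omega
    have hn' : (7 : ℝ) ≤ n := by exact_mod_cast hn
    exact exists_hitsSmallSetsRarely_of_21_le hε hε1 hn hK (by linarith) hD

theorem stmt_15_general (ε : ℝ) (hε0 : 0 < ε) (hε1 : ε ≤ 1) (n Kmax : ℕ)
    (hKmax : (1 : ℝ) < ε * Kmax) (hcard : 4 * Kmax ≤ 2 ^ n) :
    ∃ f : Fin (2 ^ n) → Fin ⌈3 * (n : ℝ) / ε⌉₊ → Fin (4 * Kmax),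
      (∀ X' : Finset (Fin (2 ^ n)), X'.card ≤ Kmax →
        ∀ Y' : Finset (Fin (4 * Kmax)), Y'.card = ⌈ε * X'.card⌉₊ →
          (((X' ×ˢ (Finset.univ : Finset (Fin ⌈3 * (n : ℝ) / ε⌉₊))).filter
                (fun p => f p.1 p.2 ∈ Y')).card : ℝ) ≤
            ε * (X'.card * ⌈3 * (n : ℝ) / ε⌉₊)) ∧
      (∀ S : Finset (Fin (2 ^ n)), S.Nonempty → S.card ≤ Kmax →
        ∑ y : Fin (4 * Kmax), max 0
          ((((S ×ˢ (Finset.univ : Finset (Fin ⌈3 * (n : ℝ) / ε⌉₊))).filter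
                (fun p => f p.1 p.2 = y)).card : ℝ) /
              (S.card * ⌈3 * (n : ℝ) / ε⌉₊) - 1 / S.card) ≤ ε) := by
  have hD : 3 * (n : ℝ) ≤ ε * ⌈3 * (n : ℝ) / ε⌉₊ :=
    (div_le_iff₀' hε0).mp (Nat.le_ceil _)
  obtain ⟨f, hf⟩ := exists_hitsSmallSetsRarely hε0 hε1 hKmax hcard hD
  refine ⟨f, hf, fun S hS hSK => sum_max_card_filter_div_sub_le _ _ hε0 (by positivity)
    hS.card_pos ?_ fun Y hY => hf S hSK Y hY⟩
  calc ⌈ε * #S⌉₊ ≤ #S := Nat.ceil_le.mpr (mul_le_of_le_one_left (Nat.cast_nonneg _) hε1)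
    _ ≤ Fintype.card (Fin (4 * Kmax)) := by rw [Fintype.card_fin]; omega

theorem stmt_15 (ε : ℝ) (hε0 : 0 < ε) (hε1 : ε ≤ 1) (n Kmax : ℕ) (hn : 0 < n)
    (hKmax : (1 : ℝ) < ε * Kmax) (hcard : 4 * Kmax ≤ 2 ^ n) :
    ∃ f : Fin (2 ^ n) → Fin ⌈3 * (n : ℝ) / ε⌉₊ → Fin (4 * Kmax),
      (∀ X' : Finset (Fin (2 ^ n)), X'.card ≤ Kmax →
        ∀ Y' : Finset (Fin (4 * Kmax)), Y'.card = ⌈ε * X'.card⌉₊ →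
          (((X' ×ˢ (Finset.univ : Finset (Fin ⌈3 * (n : ℝ) / ε⌉₊))).filter
                (fun p => f p.1 p.2 ∈ Y')).card : ℝ) ≤
            ε * (X'.card * ⌈3 * (n : ℝ) / ε⌉₊)) ∧
      (∀ S : Finset (Fin (2 ^ n)), S.Nonempty → S.card ≤ Kmax →
        ∑ y : Fin (4 * Kmax), max 0
          ((((S ×ˢ (Finset.univ : Finset (Fin ⌈3 * (n : ℝ) / ε⌉₊))).filter
                (fun p => f p.1 p.2 = y)).card : ℝ) /
              (S.card * ⌈3 * (n : ℝ) / ε⌉₊) - 1 / S.card) ≤ ε) :=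
  stmt_15_general ε hε0 hε1 n Kmax hKmax hcard
end
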